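/- arXiv:1409.0153 — 6 statements merged into one kernel-verified Lean document; each statement's English description precedes it below -/
import Mathlib

section
/- Let s : [0,∞) → ℝ be continuously differentiable with s(w) > 0 for all w, let β : [0,∞) → ℝ be continuous, and define p(w) = exp(−∫₀^w (β(v) + s'(v)/2)/(s(v)/2) dv). Let f : [0,∞) → ℝ be twice continuously differentiable such that the function w ↦ ((1/2)·s(w)·f''(w) − β(w)·f'(w))·p(w) is integrable on [0,∞) and s(w)·f'(w)·p(w) → 0 as w → ∞. Then ∫₀^∞ ((1/2)·s(w)·f''(w) − β(w)·f'(w))·p(w) dw = −(1/2)·s(0)·f'(0). -/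
open MeasureTheory intervalIntegral Filter

/-!
Write `q = (β + s'/2)/(s/2)`, so that `p = exp(-∫₀^w q)` solves `p' = -q p` on `[0, ∞)`, where
`s > 0`. The choice of `q` is exactly what makes the product rule give
`((1/2) s f' p)' = ((1/2) s f'' - β f') p`, so the integral is
`lim_{w→∞} (1/2) s f' p - (1/2) s(0) f'(0) p(0) = -(1/2) s(0) f'(0)`, as `p(0) = 1`.
-/

theorem hasDerivAt_exp_neg_integral {q : ℝ → ℝ} {a w : ℝ}
    (hint : IntervalIntegrable q volume a w) (hmeas : StronglyMeasurableAtFilter q (nhds w))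
    (hcont : ContinuousAt q w) :
    HasDerivAt (fun x => Real.exp (-∫ v in a..x, q v))
      (Real.exp (-∫ v in a..w, q v) * -q w) w :=
  (integral_hasDerivAt_right hint hmeas hcont).neg.exp

theorem hasDerivAt_half_mul_mul_mul {s s' β f' f'' p : ℝ → ℝ} {w : ℝ}
    (hs : HasDerivAt s (s' w) w) (hf' : HasDerivAt f' (f'' w) w)
    (hp : HasDerivAt p (p w * -((β w + s' w / 2) / (s w / 2))) w) (hsw : s w ≠ 0) :
    HasDerivAt (fun x => 1 / 2 * s x * f' x * p x)
      ((1 / 2 * s w * f'' w - β w * f' w) * p w) w := by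
  have h : HasDerivAt (fun x => 1 / 2 * s x * f' x * p x) _ w :=
    ((hs.const_mul (1 / 2 : ℝ)).mul hf').mul hp
  convert h using 1
  simp only [Pi.mul_apply]
  field_simp
  ring

theorem stmt3_general (s s' β f' f'' p : ℝ → ℝ)
    (hs : ∀ w, HasDerivAt s (s' w) w) (hs' : Continuous s')
    (hspos : ∀ w, 0 ≤ w → 0 < s w)
    (hβ : Continuous β)
    (hf' : ∀ w, HasDerivAt f' (f'' w) w)
    (hp : ∀ w, p w = Real.exp (-∫ v in (0 : ℝ)..w, (β v + s' v / 2) / (s v / 2)))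
    (hint : IntegrableOn (fun w => ((1 / 2) * s w * f'' w - β w * f' w) * p w)
      (Set.Ici 0))
    (hlim : Tendsto (fun w => s w * f' w * p w) atTop (nhds 0)) :
    ∫ w in Set.Ici (0 : ℝ), ((1 / 2) * s w * f'' w - β w * f' w) * p w =
      -(1 / 2) * s 0 * f' 0 := by
  set q : ℝ → ℝ := fun v => (β v + s' v / 2) / (s v / 2)
  have hs_cont : Continuous s := continuous_iff_continuousAt.2 fun w => (hs w).continuousAt
  have hq_cont : ∀ w, 0 ≤ w → ContinuousAt q w := fun w hw =>
    (hβ.continuousAt.add (hs'.continuousAt.div_const 2)).div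
      (hs_cont.continuousAt.div_const 2) (by linarith [hspos w hw])
  have hq_meas : Measurable q :=
    (hβ.measurable.add (hs'.measurable.div_const 2)).div (hs_cont.measurable.div_const 2)
  have hq_int : ∀ w, 0 ≤ w → IntervalIntegrable q volume 0 w := fun w hw =>
    ContinuousOn.intervalIntegrable fun x hx =>
      (hq_cont x (by rw [Set.uIcc_of_le hw] at hx; exact hx.1)).continuousWithinAt
  have hp_deriv : ∀ w, 0 ≤ w → HasDerivAt p (p w * -q w) w := fun w hw => by
    rw [funext hp]
    exact hasDerivAt_exp_neg_integral (hq_int w hw)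
      hq_meas.stronglyMeasurable.stronglyMeasurableAtFilter (hq_cont w hw)
  have hlim_half : Tendsto (fun w => 1 / 2 * s w * f' w * p w) atTop (nhds 0) := by
    simpa only [mul_zero, mul_assoc] using hlim.const_mul (1 / 2 : ℝ)
  rw [integral_Ici_eq_integral_Ioi, integral_Ioi_of_hasDerivAt_of_tendsto'
    (fun w hw => hasDerivAt_half_mul_mul_mul (hs w) (hf' w) (hp_deriv w hw) (hspos w hw).ne')
    (hint.mono_set Set.Ioi_subset_Ici_self) hlim_half]
  simp [hp 0]

/-- The basic-adjoint-relationship integral identity: with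
`p(w) = exp(−∫₀^w (β(v) + s'(v)/2)/(s(v)/2) dv)`,
if `((1/2)·s·f'' − β·f')·p` is integrable on `[0,∞)` and `s·f'·p → 0` at `∞`, then
`∫₀^∞ ((1/2)·s(w)·f''(w) − β(w)·f'(w))·p(w) dw = −(1/2)·s(0)·f'(0)`. -/
theorem stmt3 (s s' β f f' f'' p : ℝ → ℝ)
    (hs : ∀ w, HasDerivAt s (s' w) w) (hs' : Continuous s')
    (hspos : ∀ w, 0 ≤ w → 0 < s w)
    (hβ : Continuous β)
    (hf : ∀ w, HasDerivAt f (f' w) w) (hf' : ∀ w, HasDerivAt f' (f'' w) w)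
    (hf'' : Continuous f'')
    (hp : ∀ w, p w = Real.exp (-∫ v in (0 : ℝ)..w, (β v + s' v / 2) / (s v / 2)))
    (hint : IntegrableOn (fun w => ((1 / 2) * s w * f'' w - β w * f' w) * p w)
      (Set.Ici 0))
    (hlim : Tendsto (fun w => s w * f' w * p w) atTop (nhds 0)) :
    ∫ w in Set.Ici (0 : ℝ), ((1 / 2) * s w * f'' w - β w * f' w) * p w =
      -(1 / 2) * s 0 * f' 0 :=
  stmt3_general s s' β f' f'' p hs hs' hspos hβ hf' hp hint hlim
end

section
/- Let θ : ℝ → ℝ be continuous and bounded, and let σ > 0, m > 0, m_e > 0, v ∈ ℝ, W > 0 and G_W ∈ ℝ. Then there exists a unique continuously differentiable function G : [0,W] → ℝ with terminal value G(W) = G_W satisfying, for all w ∈ [0,W], (σ²/2)·G'(w) = v − min_{k ∈ [0, w/m_e]} ( w/m + k·(1 − m_e/m) − θ(k)·G(w) ). -/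
/-- `G` is a continuously differentiable solution on `[0,W]` of the HJB ODE
`(σ²/2)·G'(w) = v − min_{k ∈ [0,w/m_e]} ( w/m + k·(1−m_e/m) − θ(k)·G(w) )`
with terminal value `G(W) = GW`. -/
def IsHJBSolution (θ : ℝ → ℝ) (σ m me v W GW : ℝ) (G : ℝ → ℝ) : Prop :=
  ContinuousOn G (Set.Icc 0 W) ∧ G W = GW ∧
  ∀ w ∈ Set.Icc 0 W,
    HasDerivWithinAt G
      ((v - sInf ((fun k => w / m + k * (1 - me / m) - θ k * G w) ''
          Set.Icc 0 (w / me))) / (σ ^ 2 / 2))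
      (Set.Icc 0 W) w

/-!
The right-hand side `F(w, G)` of the HJB equation is Lipschitz in `G` with constant
`sup |θ| / (σ²/2)`, since an infimum of uniformly Lipschitz functions is Lipschitz, and it is
continuous in `w`, since after rescaling the control set `[0, w/m_e]` to `[0,1]` it is an infimum
over a fixed compact set. Picard–Lindelöf then gives solutions on backward steps of length
`1/(2(L+1))`, which are glued into a solution on `[0,W]`; uniqueness is the Gronwall argument.
-/

open Set NNReal Topology

lemma csInf_image_le_csInf_image_add {α : Type*} {s : Set α} (hs : s.Nonempty) {g h : α → ℝ}
    (hg : BddBelow (g '' s)) {d : ℝ} (hgh : ∀ k ∈ s, g k ≤ h k + d) :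
    sInf (g '' s) ≤ sInf (h '' s) + d := by
  rw [← sub_le_iff_le_add]
  refine le_csInf (hs.image h) ?_
  rintro _ ⟨k, hk, rfl⟩
  linarith [csInf_le hg (mem_image_of_mem g hk), hgh k hk]

lemma continuousOn_sInf_image_Icc {α : Type*} [TopologicalSpace α] {g : α → ℝ → ℝ}
    (hg : Continuous ↿g) {l r : α → ℝ} (hl : Continuous l) (hr : Continuous r) {s : Set α}
    (hlr : ∀ w ∈ s, l w ≤ r w) :
    ContinuousOn (fun w => sInf (g w '' Icc (l w) (r w))) s := by
  have hcont : Continuous fun w =>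
      sInf ((fun u => g w (AffineMap.lineMap (l w) (r w) u)) '' Icc (0 : ℝ) 1) :=
    isCompact_Icc.continuous_sInf <| by fun_prop
  refine hcont.continuousOn.congr fun w hw => ?_
  rw [← segment_eq_Icc (𝕜 := ℝ) (hlr w hw), segment_eq_image_lineMap, image_image]

section TerminalValueProblem

variable {E : Type*} [NormedAddCommGroup E] [NormedSpace ℝ E] {F : ℝ → E → E} {K : ℝ≥0}
  {a b : ℝ}

lemma exists_eq_forall_mem_Icc_hasDerivWithinAt_of_lipschitzWith_of_mul_sub_le [CompleteSpace E]
    (hF : ∀ t, LipschitzWith K (F t)) (hFc : ∀ x, ContinuousOn (F · x) (Icc a b))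
    (hab : a ≤ b) (hK : K * (b - a) ≤ 1 / 2) (x₀ : E) :
    ∃ α : ℝ → E, α b = x₀ ∧
      ∀ t ∈ Icc a b, HasDerivWithinAt α (F t (α t)) (Icc a b) t := by
  obtain ⟨M, hM⟩ := isCompact_Icc.exists_bound_of_continuousOn (hFc x₀)
  have hM0 : 0 ≤ M := (norm_nonneg _).trans (hM b ⟨hab, le_rfl⟩)
  -- since `K (b - a) ≤ 1/2`, the radius `r = 2 M (b - a)` satisfies `(M + K r) (b - a) ≤ r`
  set r : ℝ≥0 := ⟨2 * M * (b - a), by nlinarith⟩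
  have hPL : IsPicardLindelof F (tmin := a) (tmax := b) ⟨b, hab, le_rfl⟩ x₀ r 0
      ⟨M + K * r, by positivity⟩ K := by
    refine ⟨fun t _ => (hF t).lipschitzOnWith, fun x _ => hFc x, fun t ht x hx => ?_, ?_⟩
    · calc ‖F t x‖ ≤ ‖F t x₀‖ + ‖F t x - F t x₀‖ := norm_le_norm_add_norm_sub' _ _
        _ ≤ M + K * r := add_le_add (hM t ht) <| by
            rw [← dist_eq_norm]
            exact ((hF t).dist_le_mul x x₀).trans (by gcongr; exact Metric.mem_closedBall.mp hx)
    · change (M + K * (2 * M * (b - a))) * max (b - b) (b - a) ≤ 2 * M * (b - a) - 0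
      rw [sub_self, max_eq_right (sub_nonneg.mpr hab)]
      nlinarith [mul_nonneg hM0 (sub_nonneg.mpr hab)]
  exact hPL.exists_eq_forall_mem_Icc_hasDerivWithinAt₀

lemma exists_glue_forall_mem_Icc_hasDerivWithinAt {c : ℝ} {f g : ℝ → E}
    (hac : a ≤ c) (hcb : c ≤ b) (hfg : f c = g c)
    (hf : ∀ t ∈ Icc a c, HasDerivWithinAt f (F t (f t)) (Icc a c) t)
    (hg : ∀ t ∈ Icc c b, HasDerivWithinAt g (F t (g t)) (Icc c b) t) :
    ∃ α : ℝ → E, α b = g b ∧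
      ∀ t ∈ Icc a b, HasDerivWithinAt α (F t (α t)) (Icc a b) t := by
  classical
  set α : ℝ → E := fun t => if t ≤ c then f t else g t
  have hαf : EqOn α f (Icc a c) := fun t ht => if_pos ht.2
  have hαg : EqOn α g (Icc c b) := fun t ht => by
    rcases ht.1.eq_or_lt with rfl | hct
    · exact (if_pos le_rfl).trans hfg
    · exact if_neg hct.not_ge
  refine ⟨α, hαg ⟨hcb, le_rfl⟩, fun t ht => ?_⟩
  rw [← Icc_union_Icc_eq_Icc hac hcb]
  refine HasDerivWithinAt.union ?_ ?_
  · by_cases htc : t ≤ c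
    · have htac : t ∈ Icc a c := ⟨ht.1, htc⟩
      rw [hαf htac]
      exact (hf t htac).congr hαf (hαf htac)
    · exact HasFDerivWithinAt.of_notMem_closure (by rw [closure_Icc]; exact fun h => htc h.2)
  · by_cases hct : c ≤ t
    · have htcb : t ∈ Icc c b := ⟨hct, ht.2⟩
      rw [hαg htcb]
      exact (hg t htcb).congr hαg (hαg htcb)
    · exact HasFDerivWithinAt.of_notMem_closure (by rw [closure_Icc]; exact fun h => hct h.1)

lemma exists_eq_forall_mem_Icc_hasDerivWithinAt_of_lipschitzWith [CompleteSpace E]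
    (hF : ∀ t, LipschitzWith K (F t)) (hFc : ∀ x, ContinuousOn (F · x) (Icc a b))
    (hab : a ≤ b) (x₀ : E) :
    ∃ α : ℝ → E, α b = x₀ ∧
      ∀ t ∈ Icc a b, HasDerivWithinAt α (F t (α t)) (Icc a b) t := by
  set h : ℝ := 1 / (2 * (K + 1))
  have hh : 0 < h := by positivity
  have hKh : K * h ≤ 1 / 2 := by
    rw [mul_one_div, div_le_div_iff₀ (by positivity) two_pos]
    linarith
  have local_solution : ∀ {c d}, a ≤ c → c ≤ d → d ≤ b → d - c ≤ h → ∀ y : E,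
      ∃ β : ℝ → E, β d = y ∧ ∀ t ∈ Icc c d, HasDerivWithinAt β (F t (β t)) (Icc c d) t :=
    fun hac hcd hdb hdc y =>
      exists_eq_forall_mem_Icc_hasDerivWithinAt_of_lipschitzWith_of_mul_sub_le hF
        (fun x => (hFc x).mono (Icc_subset_Icc hac hdb)) hcd (by nlinarith [K.2]) y
  have solution_on : ∀ n : ℕ, ∀ c ∈ Icc a b, b - n * h ≤ c → ∃ α : ℝ → E, α b = x₀ ∧
      ∀ t ∈ Icc c b, HasDerivWithinAt α (F t (α t)) (Icc c b) t := by
    intro n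
    induction n with
    | zero =>
      intro c hc hbc
      exact local_solution hc.1 hc.2 le_rfl (by push_cast at hbc; linarith) x₀
    | succ n ih =>
      intro c hc hbc
      push_cast at hbc
      set c₁ := max c (b - n * h)
      have hcc₁ : c ≤ c₁ := le_max_left _ _
      have hc₁b : c₁ ≤ b := max_le hc.2 (by nlinarith [n.cast_nonneg (α := ℝ)])
      obtain ⟨f, hfb, hf⟩ := ih c₁ ⟨hc.1.trans hcc₁, hc₁b⟩ (le_max_right _ _)
      obtain ⟨g, hgc₁, hg⟩ := local_solution hc.1 hcc₁ hc₁b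
        (sub_le_iff_le_add.mpr (max_le (by linarith) (by linarith))) (f c₁)
      obtain ⟨α, hαb, hα⟩ := exists_glue_forall_mem_Icc_hasDerivWithinAt hcc₁ hc₁b hgc₁ hg hf
      exact ⟨α, hαb.trans hfb, hα⟩
  obtain ⟨n, hn⟩ := exists_nat_ge ((b - a) / h)
  exact solution_on n a (left_mem_Icc.mpr hab) (by linarith [(div_le_iff₀ hh).mp hn])

lemma eqOn_Icc_of_hasDerivWithinAt_of_lipschitzWith (hF : ∀ t, LipschitzWith K (F t))
    {f g : ℝ → E} (hf : ∀ t ∈ Icc a b, HasDerivWithinAt f (F t (f t)) (Icc a b) t)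
    (hg : ∀ t ∈ Icc a b, HasDerivWithinAt g (F t (g t)) (Icc a b) t) (hfg : f b = g b) :
    EqOn f g (Icc a b) := by
  have hnhds : ∀ t ∈ Ioc a b, Icc a b ∈ 𝓝[≤] t := fun t ht =>
    mem_nhdsWithin.mpr ⟨Ioi a, isOpen_Ioi, ht.1, fun x hx => ⟨hx.1.le, hx.2.trans ht.2⟩⟩
  exact ODE_solution_unique_of_mem_Icc_left (s := fun _ => univ)
    (fun t _ => (hF t).lipschitzOnWith) (fun t ht => (hf t ht).continuousWithinAt)
    (fun t ht => (hf t (Ioc_subset_Icc_self ht)).mono_of_mem_nhdsWithin (hnhds t ht))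
    (fun _ _ => mem_univ _) (fun t ht => (hg t ht).continuousWithinAt)
    (fun t ht => (hg t (Ioc_subset_Icc_self ht)).mono_of_mem_nhdsWithin (hnhds t ht))
    (fun _ _ => mem_univ _) hfg

end TerminalValueProblem

noncomputable def hjbField (θ : ℝ → ℝ) (σ m me v w x : ℝ) : ℝ :=
  (v - sInf ((fun k => w / m + k * (1 - me / m) - θ k * x) '' Icc 0 (w / me))) / (σ ^ 2 / 2)

lemma lipschitzWith_hjbField {θ : ℝ → ℝ} (hθ : Continuous θ) {C : ℝ} (hC : ∀ k, |θ k| ≤ C)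
    (σ m me v w : ℝ) : LipschitzWith (C / (σ ^ 2 / 2)).toNNReal (hjbField θ σ m me v w) := by
  refine LipschitzWith.of_le_add_mul' _ fun x y => ?_
  have hC0 : 0 ≤ C := (abs_nonneg _).trans (hC 0)
  rcases (Icc 0 (w / me)).eq_empty_or_nonempty with hs | hs
  · simp only [hjbField, hs, image_empty, le_add_iff_nonneg_right]
    positivity
  have hinf : sInf ((fun k => w / m + k * (1 - me / m) - θ k * y) '' Icc 0 (w / me)) ≤
      sInf ((fun k => w / m + k * (1 - me / m) - θ k * x) '' Icc 0 (w / me)) + C * dist x y := by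
    refine csInf_image_le_csInf_image_add hs (isCompact_Icc.bddBelow_image (by fun_prop))
      fun k _ => ?_
    have : θ k * (x - y) ≤ C * dist x y := by
      rw [Real.dist_eq]
      exact (le_abs_self _).trans ((abs_mul _ _).trans_le
        (mul_le_mul_of_nonneg_right (hC k) (abs_nonneg _)))
    linarith
  calc hjbField θ σ m me v w x
      ≤ (v - sInf ((fun k => w / m + k * (1 - me / m) - θ k * y) '' Icc 0 (w / me))
          + C * dist x y) / (σ ^ 2 / 2) := by
        unfold hjbField; gcongr; linarith
    _ = hjbField θ σ m me v w y + C / (σ ^ 2 / 2) * dist x y := by unfold hjbField; ring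

lemma continuousOn_hjbField {θ : ℝ → ℝ} (hθ : Continuous θ) {me : ℝ} (hme : 0 ≤ me)
    (σ m v x : ℝ) : ContinuousOn (fun w => hjbField θ σ m me v w x) (Ici 0) :=
  (continuousOn_const.sub <| continuousOn_sInf_image_Icc
    (g := fun w k => w / m + k * (1 - me / m) - θ k * x) (by fun_prop) continuous_const
    (by fun_prop) fun _ hw => div_nonneg hw hme).div_const _

theorem stmt7_general (θ : ℝ → ℝ) (hθc : Continuous θ) (hθb : ∃ C, ∀ k, |θ k| ≤ C)
    (σ m me v W GW : ℝ) (hme : 0 < me) (hW : 0 < W) :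
    (∃ G : ℝ → ℝ, IsHJBSolution θ σ m me v W GW G) ∧
    (∀ G₁ G₂ : ℝ → ℝ, IsHJBSolution θ σ m me v W GW G₁ →
      IsHJBSolution θ σ m me v W GW G₂ → Set.EqOn G₁ G₂ (Set.Icc 0 W)) := by
  obtain ⟨C, hC⟩ := hθb
  have hlip := lipschitzWith_hjbField hθc hC σ m me v
  have hcont : ∀ x, ContinuousOn (hjbField θ σ m me v · x) (Icc 0 W) := fun x =>
    (continuousOn_hjbField hθc hme.le σ m v x).mono Icc_subset_Ici_self
  refine ⟨?_, fun G₁ G₂ h₁ h₂ => ?_⟩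
  · obtain ⟨G, hGW, hG⟩ := exists_eq_forall_mem_Icc_hasDerivWithinAt_of_lipschitzWith hlip hcont
      hW.le GW
    exact ⟨G, fun w hw => (hG w hw).continuousWithinAt, hGW, hG⟩
  · exact eqOn_Icc_of_hasDerivWithinAt_of_lipschitzWith hlip h₁.2.2 h₂.2.2
      (h₁.2.1.trans h₂.2.1.symm)

/-- Existence and uniqueness of the continuously differentiable solution of the HJB
terminal value problem on `[0,W]`, for `θ` continuous and bounded. -/
theorem stmt7 (θ : ℝ → ℝ) (hθc : Continuous θ) (hθb : ∃ C, ∀ k, |θ k| ≤ C)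
    (σ m me v W GW : ℝ) (hσ : 0 < σ) (hm : 0 < m) (hme : 0 < me) (hW : 0 < W) :
    (∃ G : ℝ → ℝ, IsHJBSolution θ σ m me v W GW G) ∧
    (∀ G₁ G₂ : ℝ → ℝ, IsHJBSolution θ σ m me v W GW G₁ →
      IsHJBSolution θ σ m me v W GW G₂ → Set.EqOn G₁ G₂ (Set.Icc 0 W)) :=
  stmt7_general θ hθc hθb σ m me v W GW hme hW
end

section
/- Let θ : ℝ → ℝ be continuous and bounded, and let σ > 0, m > 0, m_e > 0, W > 0 and v₁ ≥ v₂ be reals. Suppose G₁, G₂ : [0,W] → ℝ are differentiable, satisfy G₁(0) = G₂(0), and for i ∈ {1,2} and all w ∈ [0,W] satisfy (σ²/2)·G_i'(w) = v_i − min_{k ∈ [0, w/m_e]} ( w/m + k·(1 − m_e/m) − θ(k)·G_i(w) ). Then G₁(w) ≥ G₂(w) for all w ∈ [0,W]. -/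
/-!
The difference `h = G₂ - G₁` vanishes at `0`, and because the minimum in the HJB equation moves by
at most `C ⋅ |G₂ - G₁|` when `G` is changed (with `|θ| ≤ C`), it satisfies the one-sided bound
`h' ≤ (2C/σ²) h` wherever `h > 0`, the term `v₂ - v₁ ≤ 0` only helping. A Gronwall-type barrier
argument, comparing `h` with `ε exp (L w)` for `L > 2C/σ²` and letting `ε → 0`, gives `h ≤ 0`.
-/

open Set

theorem nonpos_of_hasDerivWithinAt_le_mul_of_pos {h h' : ℝ → ℝ} {a b K : ℝ}
    (hcont : ContinuousOn h (Icc a b))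
    (hderiv : ∀ x ∈ Ico a b, HasDerivWithinAt h (h' x) (Icc a b) x) (ha : h a ≤ 0)
    (hbound : ∀ x ∈ Ico a b, 0 < h x → h' x ≤ K * h x) :
    ∀ x ∈ Icc a b, h x ≤ 0 := by
  set L := |K| + 1
  have barrier : ∀ ε > 0, ∀ x ∈ Icc a b, h x ≤ ε * Real.exp (L * x) := by
    intro ε hε
    refine image_le_of_deriv_right_lt_deriv_boundary hcont
      (fun x hx => (hderiv x hx).mono_of_mem_nhdsWithin (Icc_mem_nhdsGE_of_mem hx))
      (B' := fun x => ε * Real.exp (L * x) * L) (ha.trans (by positivity))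
      (fun x => by simpa [mul_assoc] using ((hasDerivAt_id x).const_mul L).exp.const_mul ε) ?_
    intro x hx hhB
    have hpos : 0 < h x := hhB ▸ by positivity
    calc h' x ≤ K * h x := hbound x hx hpos
      _ < L * h x := by gcongr; exact (le_abs_self K).trans_lt (lt_add_one _)
      _ = ε * Real.exp (L * x) * L := by rw [hhB]; ring
  intro x hx
  refine le_of_forall_pos_le_add fun δ hδ => ?_
  have hE : 0 < Real.exp (L * x) := Real.exp_pos _
  simpa [div_mul_cancel₀ δ hE.ne'] using barrier (δ / Real.exp (L * x)) (by positivity) x hx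

theorem csInf_image_le_csInf_image_add_s9 {α : Type*} {S : Set α} {f g : α → ℝ} {c : ℝ}
    (hS : S.Nonempty) (hf : BddBelow (f '' S)) (hfg : ∀ x ∈ S, f x ≤ g x + c) :
    sInf (f '' S) ≤ sInf (g '' S) + c := by
  rw [← sub_le_iff_le_add]
  refine le_csInf (hS.image g) ?_
  rintro _ ⟨x, hx, rfl⟩
  rw [sub_le_iff_le_add]
  exact (csInf_le hf (mem_image_of_mem f hx)).trans (hfg x hx)

noncomputable def hjbMin (θ : ℝ → ℝ) (m me w g : ℝ) : ℝ :=
  sInf ((fun k => w / m + k * (1 - me / m) - θ k * g) '' Icc 0 (w / me))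

theorem hjbMin_le_add_abs {θ : ℝ → ℝ} (hθc : Continuous θ) {C : ℝ} (hC : ∀ k, |θ k| ≤ C)
    {m me w : ℝ} (hme : 0 ≤ me) (hw : 0 ≤ w) (g₁ g₂ : ℝ) :
    hjbMin θ m me w g₁ ≤ hjbMin θ m me w g₂ + C * |g₂ - g₁| := by
  refine csInf_image_le_csInf_image_add_s9 ⟨0, le_rfl, div_nonneg hw hme⟩
    (isCompact_Icc.image (by fun_prop)).bddBelow fun k _ => ?_
  have hθk : θ k * (g₂ - g₁) ≤ C * |g₂ - g₁| :=
    (le_abs_self _).trans (abs_mul (θ k) _ ▸ by gcongr; exact hC k)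
  linarith

theorem stmt9_general (θ : ℝ → ℝ) (hθc : Continuous θ) (hθb : ∃ C, ∀ k, |θ k| ≤ C)
    (σ m me W v₁ v₂ : ℝ) (hσ : 0 < σ) (hme : 0 < me)
    (hv : v₁ ≥ v₂)
    (G₁ G₂ : ℝ → ℝ) (h0 : G₁ 0 = G₂ 0)
    (hG₁ : ∀ w ∈ Set.Icc 0 W,
      HasDerivWithinAt G₁
        ((v₁ - sInf ((fun k => w / m + k * (1 - me / m) - θ k * G₁ w) ''
            Set.Icc 0 (w / me))) / (σ ^ 2 / 2))
        (Set.Icc 0 W) w)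
    (hG₂ : ∀ w ∈ Set.Icc 0 W,
      HasDerivWithinAt G₂
        ((v₂ - sInf ((fun k => w / m + k * (1 - me / m) - θ k * G₂ w) ''
            Set.Icc 0 (w / me))) / (σ ^ 2 / 2))
        (Set.Icc 0 W) w) :
    ∀ w ∈ Set.Icc 0 W, G₁ w ≥ G₂ w := by
  obtain ⟨C, hC⟩ := hθb
  have hs : 0 < σ ^ 2 / 2 := by positivity
  have hderiv : ∀ w ∈ Icc 0 W, HasDerivWithinAt (fun w => G₂ w - G₁ w)
      ((v₂ - hjbMin θ m me w (G₂ w)) / (σ ^ 2 / 2) - (v₁ - hjbMin θ m me w (G₁ w)) / (σ ^ 2 / 2))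
      (Icc 0 W) w := fun w hw => (hG₂ w hw).sub (hG₁ w hw)
  have hnonpos := nonpos_of_hasDerivWithinAt_le_mul_of_pos (K := C / (σ ^ 2 / 2))
    (fun w hw => (hderiv w hw).continuousWithinAt) (fun w hw => hderiv w (Ico_subset_Icc_self hw))
    (by simp [h0]) fun w hw hpos => by
      have hmin := hjbMin_le_add_abs hθc hC (m := m) hme.le hw.1 (G₁ w) (G₂ w)
      rw [abs_of_pos hpos] at hmin
      rw [div_sub_div_same, div_mul_eq_mul_div]
      gcongr
      linarith
  exact fun w hw => sub_nonpos.mp (hnonpos w hw)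

/-- Comparison result for the HJB ODE: two solutions with the same initial value
and average-cost guesses `v₁ ≥ v₂` satisfy `G₁ ≥ G₂` on `[0,W]`. -/
theorem stmt9 (θ : ℝ → ℝ) (hθc : Continuous θ) (hθb : ∃ C, ∀ k, |θ k| ≤ C)
    (σ m me W v₁ v₂ : ℝ) (hσ : 0 < σ) (hm : 0 < m) (hme : 0 < me) (hW : 0 < W)
    (hv : v₁ ≥ v₂)
    (G₁ G₂ : ℝ → ℝ) (h0 : G₁ 0 = G₂ 0)
    (hG₁ : ∀ w ∈ Set.Icc 0 W,
      HasDerivWithinAt G₁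
        ((v₁ - sInf ((fun k => w / m + k * (1 - me / m) - θ k * G₁ w) ''
            Set.Icc 0 (w / me))) / (σ ^ 2 / 2))
        (Set.Icc 0 W) w)
    (hG₂ : ∀ w ∈ Set.Icc 0 W,
      HasDerivWithinAt G₂
        ((v₂ - sInf ((fun k => w / m + k * (1 - me / m) - θ k * G₂ w) ''
            Set.Icc 0 (w / me))) / (σ ^ 2 / 2))
        (Set.Icc 0 W) w) :
    ∀ w ∈ Set.Icc 0 W, G₁ w ≥ G₂ w :=
  stmt9_general θ hθc hθb σ m me W v₁ v₂ hσ hme hv G₁ G₂ h0 hG₁ hG₂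
end

section
/- Let g : ℝ → ℝ be Lipschitz continuous and let x : [0,∞) → ℝ be continuous with x(0) ≥ 0. Suppose for i = 1, 2 the pairs (y_i, z_i) of continuous functions from [0,∞) to ℝ satisfy: (i) z_i(t) = ∫₀^t g(z_i(s)) ds + x(t) + y_i(t) for all t ≥ 0; (ii) z_i(t) ≥ 0 for all t ≥ 0; (iii) y_i(0) = 0 and y_i is nondecreasing; (iv) for every t ≥ 0, the Lebesgue–Stieltjes measure induced by y_i assigns measure zero to the set {s ∈ [0,t] : z_i(s) > 0} (equivalently, ∫₀^t z_i(s) dy_i(s) = 0). Then z₁ = z₂ and y₁ = y₂. -/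
/-- `(y, z)` solves the one-dimensional Skorokhod reflection problem with
state-dependent drift `g` and input path `x`: `z(t) = ∫₀^t g(z(s)) ds + x(t) + y(t)`,
`z ≥ 0`, `y(0) = 0`, `y` nondecreasing, and `y` increases only when `z` is at zero
(equivalently, the Lebesgue–Stieltjes measure of `y` gives zero mass to `{z > 0}`,
i.e. `∫₀^t z dy = 0`). -/
def IsSkorokhodSolution (g x y z : ℝ → ℝ) : Prop :=
  ContinuousOn y (Set.Ici 0) ∧ ContinuousOn z (Set.Ici 0) ∧
  (∀ t, 0 ≤ t → z t = (∫ s in (0 : ℝ)..t, g (z s)) + x t + y t) ∧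
  (∀ t, 0 ≤ t → 0 ≤ z t) ∧
  y 0 = 0 ∧ MonotoneOn y (Set.Ici 0) ∧
  (∀ a b, 0 ≤ a → a ≤ b → (∀ u ∈ Set.Icc a b, 0 < z u) → y a = y b)

/-!
Fix `t ≥ 0` with `z₁ t > z₂ t` and let `τ` be the last time before `t` with `z₁ τ ≤ z₂ τ`
(it exists since `z₁ 0 = x 0 = z₂ 0`). On `(τ, t]` we have `z₁ > z₂ ≥ 0`, so `y₁` is constant
there (and, being continuous, also at `τ`), while `y₂` is nondecreasing. Hence
`z₁ t - z₂ t ≤ ∫_τ^t (g z₁ - g z₂) ≤ L ∫_0^t |z₁ - z₂|`; by symmetry this bounds `|z₁ t - z₂ t|`,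
and Grönwall's inequality gives `z₁ = z₂`, after which the equation determines `y`.
-/

open MeasureTheory intervalIntegral Set Filter Topology

theorem exists_last_nonpos_of_continuousOn {d : ℝ → ℝ} {a b : ℝ} (hd : ContinuousOn d (Icc a b))
    (hab : a ≤ b) (ha : d a ≤ 0) :
    ∃ τ ∈ Icc a b, d τ ≤ 0 ∧ ∀ u ∈ Ioc τ b, 0 < d u := by
  set S := Icc a b ∩ d ⁻¹' Iic 0
  have hS : IsCompact S :=
    isCompact_Icc.of_isClosed_subset (hd.preimage_isClosed_of_isClosed isClosed_Icc isClosed_Iic)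
      inter_subset_left
  obtain ⟨τ, ⟨hτab, hdτ⟩, hτmax⟩ := hS.exists_isGreatest ⟨a, ⟨left_mem_Icc.2 hab, ha⟩⟩
  refine ⟨τ, hτab, hdτ, fun u hu => ?_⟩
  by_contra! hdu
  exact (hτmax ⟨⟨hτab.1.trans hu.1.le, hu.2⟩, hdu⟩).not_gt hu.1

theorem eq_zero_of_le_mul_integral {Δ : ℝ → ℝ} {K a : ℝ} (hc : ContinuousOn Δ (Ici a))
    (hnonneg : ∀ t, a ≤ t → 0 ≤ Δ t) (hle : ∀ t, a ≤ t → Δ t ≤ K * ∫ s in a..t, Δ s) :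
    ∀ t, a ≤ t → Δ t = 0 := by
  intro T hT
  set F : ℝ → ℝ := fun t => ∫ s in a..t, Δ s
  have hint : ∀ t, a ≤ t → IntervalIntegrable Δ volume a t := fun t ht =>
    (hc.mono (ordConnected_Ici.uIcc_subset self_mem_Ici ht)).intervalIntegrable
  have hF_nonneg : ∀ t, a ≤ t → 0 ≤ F t := fun t ht =>
    integral_nonneg ht fun s hs => hnonneg s hs.1
  have hF_zero : ∀ t ∈ Icc a T, F t = 0 := by
    refine eq_zero_of_abs_deriv_le_mul_abs_self_of_eq_zero_right (f' := Δ) (K := K) ?_ ?_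
      integral_same ?_
    · rw [← uIcc_of_le hT]
      exact continuousOn_primitive_interval' (hint T hT) left_mem_uIcc
    · intro t ht
      exact integral_hasDerivWithinAt_right (hint t ht.1)
        ((hc.stronglyMeasurableAtFilter_nhdsWithin measurableSet_Ici t).filter_mono
          (nhdsWithin_mono _ (Ioi_subset_Ici ht.1)))
        ((hc t ht.1).mono (Ioi_subset_Ici ht.1))
    · intro t ht
      rw [Real.norm_of_nonneg (hnonneg t ht.1), Real.norm_of_nonneg (hF_nonneg t ht.1)]
      exact hle t ht.1
  refine le_antisymm ?_ (hnonneg T hT)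
  calc Δ T ≤ K * F T := hle T hT
    _ = 0 := by rw [hF_zero T ⟨hT, le_rfl⟩, mul_zero]

theorem LipschitzWith.integral_comp_sub_integral_comp_le {g : ℝ → ℝ} {K : NNReal}
    (hg : LipschitzWith K g) {f₁ f₂ : ℝ → ℝ} {a b : ℝ} (hab : a ≤ b)
    (h₁ : IntervalIntegrable (fun s => g (f₁ s)) volume a b)
    (h₂ : IntervalIntegrable (fun s => g (f₂ s)) volume a b)
    (hd : IntervalIntegrable (fun s => |f₁ s - f₂ s|) volume a b) :
    (∫ s in a..b, g (f₁ s)) - ∫ s in a..b, g (f₂ s) ≤ K * ∫ s in a..b, |f₁ s - f₂ s| := by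
  rw [← integral_sub h₁ h₂, ← intervalIntegral.integral_const_mul]
  refine integral_mono_on hab (h₁.sub h₂) (hd.const_mul _) fun s _ => ?_
  simpa only [Real.dist_eq] using (le_abs_self _).trans (hg.dist_le_mul (f₁ s) (f₂ s))

namespace IsSkorokhodSolution

variable {g x y z : ℝ → ℝ}

theorem apply_zero (h : IsSkorokhodSolution g x y z) : z 0 = x 0 := by
  obtain ⟨-, -, heq, -, hy0, -, -⟩ := h
  simpa [hy0] using heq 0 le_rfl

theorem intervalIntegrable_comp (h : IsSkorokhodSolution g x y z) (hg : Continuous g)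
    {a b : ℝ} (ha : 0 ≤ a) (hb : 0 ≤ b) :
    IntervalIntegrable (fun s => g (z s)) volume a b :=
  ((hg.comp_continuousOn h.2.1).mono (ordConnected_Ici.uIcc_subset ha hb)).intervalIntegrable

theorem sub_eq (h : IsSkorokhodSolution g x y z) (hg : Continuous g) {a b : ℝ}
    (ha : 0 ≤ a) (hb : 0 ≤ b) :
    z b - z a = (∫ s in a..b, g (z s)) + (x b - x a) + (y b - y a) := by
  rw [h.2.2.1 b hb, h.2.2.1 a ha, ← integral_interval_sub_left
    (h.intervalIntegrable_comp hg le_rfl hb) (h.intervalIntegrable_comp hg le_rfl ha)]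
  ring

theorem eq_of_pos_on_Ioc (h : IsSkorokhodSolution g x y z) {τ t : ℝ} (hτ : 0 ≤ τ)
    (hτt : τ < t) (hpos : ∀ u ∈ Ioc τ t, 0 < z u) : y τ = y t := by
  obtain ⟨hy, -, -, -, -, -, hconst⟩ := h
  have hflat : ∀ u ∈ Ioc τ t, y u = y t := fun u hu =>
    hconst u t (hτ.trans hu.1.le) hu.2 fun v hv => hpos v ⟨hu.1.trans_le hv.1, hv.2⟩
  have := left_nhdsWithin_Ioc_neBot hτt
  refine tendsto_nhds_unique (f := y) (l := 𝓝[Ioc τ t] τ) ?_ ?_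
  · exact (hy τ hτ).mono fun v hv => hτ.trans hv.1.le
  · exact tendsto_const_nhds.congr' (eventually_nhdsWithin_of_forall fun u hu => (hflat u hu).symm)

end IsSkorokhodSolution

section TwoSolutions

variable {g x y₁ z₁ y₂ z₂ : ℝ → ℝ} {L : NNReal}

theorem IsSkorokhodSolution.sub_le_mul_integral (h₁ : IsSkorokhodSolution g x y₁ z₁)
    (h₂ : IsSkorokhodSolution g x y₂ z₂) (hg : LipschitzWith L g) {t : ℝ} (ht : 0 ≤ t) :
    z₁ t - z₂ t ≤ L * ∫ u in (0 : ℝ)..t, |z₁ u - z₂ u| := by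
  have hdiff : ContinuousOn (fun u => z₁ u - z₂ u) (Ici 0) := h₁.2.1.sub h₂.2.1
  have hint : ∀ a, 0 ≤ a → IntervalIntegrable (fun u => |z₁ u - z₂ u|) volume a t := fun a ha =>
    (hdiff.abs.mono (ordConnected_Ici.uIcc_subset ha ht)).intervalIntegrable
  have hI : 0 ≤ (L : ℝ) * ∫ u in (0 : ℝ)..t, |z₁ u - z₂ u| :=
    mul_nonneg L.coe_nonneg (integral_nonneg ht fun u _ => abs_nonneg _)
  obtain ⟨τ, ⟨hτ, hτt⟩, hdτ, hpos⟩ := exists_last_nonpos_of_continuousOn (hdiff.mono Icc_subset_Ici_self) ht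
    (by rw [h₁.apply_zero, h₂.apply_zero, sub_self])
  rcases hτt.eq_or_lt with rfl | hτt
  · exact hdτ.trans hI
  have hy₁ : y₁ τ = y₁ t := h₁.eq_of_pos_on_Ioc hτ hτt fun u hu =>
    (h₂.2.2.2.1 u (hτ.trans hu.1.le)).trans_lt (sub_pos.1 (hpos u hu))
  have hy₂ : y₂ τ ≤ y₂ t := h₂.2.2.2.2.2.1 (mem_Ici.2 hτ) (mem_Ici.2 ht) hτt.le
  have hdrift : (∫ u in τ..t, g (z₁ u)) - ∫ u in τ..t, g (z₂ u) ≤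
      L * ∫ u in (0 : ℝ)..t, |z₁ u - z₂ u| :=
    calc (∫ u in τ..t, g (z₁ u)) - ∫ u in τ..t, g (z₂ u)
        ≤ L * ∫ u in τ..t, |z₁ u - z₂ u| :=
          hg.integral_comp_sub_integral_comp_le hτt.le
            (h₁.intervalIntegrable_comp hg.continuous hτ ht)
            (h₂.intervalIntegrable_comp hg.continuous hτ ht) (hint τ hτ)
      _ ≤ L * ∫ u in (0 : ℝ)..t, |z₁ u - z₂ u| := by
          gcongr
          exact integral_mono_interval hτ hτt.le le_rfl
            (Eventually.of_forall fun u => abs_nonneg _) (hint 0 le_rfl)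
  have e₁ := h₁.sub_eq hg.continuous hτ ht
  have e₂ := h₂.sub_eq hg.continuous hτ ht
  linarith

theorem IsSkorokhodSolution.abs_sub_le_mul_integral (h₁ : IsSkorokhodSolution g x y₁ z₁)
    (h₂ : IsSkorokhodSolution g x y₂ z₂) (hg : LipschitzWith L g) {t : ℝ} (ht : 0 ≤ t) :
    |z₁ t - z₂ t| ≤ L * ∫ u in (0 : ℝ)..t, |z₁ u - z₂ u| := by
  refine abs_sub_le_iff.2 ⟨h₁.sub_le_mul_integral h₂ hg ht, ?_⟩
  simpa only [abs_sub_comm (z₂ _)] using h₂.sub_le_mul_integral h₁ hg ht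

theorem IsSkorokhodSolution.eqOn_reflected (h₁ : IsSkorokhodSolution g x y₁ z₁)
    (h₂ : IsSkorokhodSolution g x y₂ z₂) (hg : LipschitzWith L g) :
    EqOn z₁ z₂ (Ici 0) := fun t ht =>
  sub_eq_zero.1 <| abs_eq_zero.1 <|
    eq_zero_of_le_mul_integral (h₁.2.1.sub h₂.2.1).abs (fun _ _ => abs_nonneg _)
      (fun _ hs => h₁.abs_sub_le_mul_integral h₂ hg hs) t ht

theorem IsSkorokhodSolution.eqOn_regulator (h₁ : IsSkorokhodSolution g x y₁ z₁)
    (h₂ : IsSkorokhodSolution g x y₂ z₂) (hz : EqOn z₁ z₂ (Ici 0)) :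
    EqOn y₁ y₂ (Ici 0) := by
  intro t ht
  have hdrift : (∫ s in (0 : ℝ)..t, g (z₁ s)) = ∫ s in (0 : ℝ)..t, g (z₂ s) :=
    integral_congr fun u hu => congrArg g (hz (ordConnected_Ici.uIcc_subset self_mem_Ici ht hu))
  have e₁ := h₁.2.2.1 t ht
  have e₂ := h₂.2.2.1 t ht
  linarith [hz ht]

end TwoSolutions

theorem stmt12_general (g : ℝ → ℝ) (hg : ∃ L : NNReal, LipschitzWith L g)
    (x : ℝ → ℝ)
    (y₁ z₁ y₂ z₂ : ℝ → ℝ)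
    (h1 : IsSkorokhodSolution g x y₁ z₁) (h2 : IsSkorokhodSolution g x y₂ z₂) :
    Set.EqOn z₁ z₂ (Set.Ici 0) ∧ Set.EqOn y₁ y₂ (Set.Ici 0) := by
  obtain ⟨L, hL⟩ := hg
  have hz := h1.eqOn_reflected h2 hL
  exact ⟨hz, h1.eqOn_regulator h2 hz⟩

/-- Uniqueness for the one-dimensional Skorokhod reflection problem with Lipschitz
state-dependent drift `g`. -/
theorem stmt12 (g : ℝ → ℝ) (hg : ∃ L : NNReal, LipschitzWith L g)
    (x : ℝ → ℝ) (hx : ContinuousOn x (Set.Ici 0)) (hx0 : 0 ≤ x 0)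
    (y₁ z₁ y₂ z₂ : ℝ → ℝ)
    (h1 : IsSkorokhodSolution g x y₁ z₁) (h2 : IsSkorokhodSolution g x y₂ z₂) :
    Set.EqOn z₁ z₂ (Set.Ici 0) ∧ Set.EqOn y₁ y₂ (Set.Ici 0) :=
  stmt12_general g hg x y₁ z₁ y₂ z₂ h1 h2
end

section
/- Let g : ℝ → ℝ be Lipschitz continuous and let x : [0,∞) → ℝ be continuous with x(0) ≥ 0. Then there exists a pair (y, z) of continuous functions from [0,∞) to ℝ satisfying: (i) z(t) = ∫₀^t g(z(s)) ds + x(t) + y(t) for all t ≥ 0; (ii) z(t) ≥ 0 for all t ≥ 0; (iii) y(0) = 0 and y is nondecreasing; (iv) for every t ≥ 0, the Lebesgue–Stieltjes measure induced by y assigns measure zero to the set {s ∈ [0,t] : z(s) > 0} (equivalently, ∫₀^t z(s) dy(s) = 0). -/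
open Set Filter Topology Interval intervalIntegral

namespace Skorokhod

lemma continuousOn_Ici_of_forall_Icc {f : ℝ → ℝ} {a : ℝ}
    (h : ∀ b, a ≤ b → ContinuousOn f (Icc a b)) : ContinuousOn f (Ici a) := fun t ht =>
  (h (t + 1) (ht.out.trans (by linarith)) t ⟨ht, by linarith⟩).mono_of_mem_nhdsWithin <| by
    rw [← Ici_inter_Iic]; exact inter_mem_nhdsWithin _ (Iic_mem_nhds (lt_add_one t))

noncomputable def regulator (f : ℝ → ℝ) (t : ℝ) : ℝ := sSup (f⁻ '' Icc 0 t)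

noncomputable def skorokhodMap (f : ℝ → ℝ) (t : ℝ) : ℝ := f t + regulator f t

section Regulator

variable {f f' : ℝ → ℝ} {a b s t ε : ℝ}

lemma negPart_le_regulator (hf : ContinuousOn f (Icc 0 t)) (hs : s ∈ Icc 0 t) :
    (f s)⁻ ≤ regulator f t :=
  le_csSup (isCompact_Icc.bddAbove_image (continuous_negPart.comp_continuousOn hf))
    (mem_image_of_mem _ hs)

lemma regulator_le (ht : 0 ≤ t) (h : ∀ s ∈ Icc 0 t, (f s)⁻ ≤ ε) : regulator f t ≤ ε :=
  csSup_le ((nonempty_Icc.2 ht).image _) (forall_mem_image.2 h)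

lemma regulator_nonneg (hf : ContinuousOn f (Icc 0 t)) (ht : 0 ≤ t) : 0 ≤ regulator f t :=
  (negPart_nonneg _).trans (negPart_le_regulator hf ⟨le_rfl, ht⟩)

lemma skorokhodMap_nonneg (hf : ContinuousOn f (Icc 0 t)) (ht : 0 ≤ t) :
    0 ≤ skorokhodMap f t := by
  have := (neg_le_negPart (f t)).trans (negPart_le_regulator hf ⟨ht, le_rfl⟩)
  rw [skorokhodMap]; linarith

lemma regulator_zero (hf : 0 ≤ f 0) : regulator f 0 = 0 := by
  simp [regulator, Icc_self, negPart_eq_zero.2 hf]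

lemma monotoneOn_regulator (hf : ContinuousOn f (Ici 0)) : MonotoneOn (regulator f) (Ici 0) :=
  fun _ ha _ _ hab => csSup_le_csSup
    (isCompact_Icc.bddAbove_image (continuous_negPart.comp_continuousOn
      (hf.mono Icc_subset_Ici_self)))
    ((nonempty_Icc.2 ha.out).image _) (image_mono (Icc_subset_Icc_right hab))

lemma regulator_le_add (ht : 0 ≤ t) (hf' : ContinuousOn f' (Icc 0 t))
    (h : ∀ s ∈ Icc 0 t, |f s - f' s| ≤ ε) : regulator f t ≤ regulator f' t + ε :=
  regulator_le ht fun s hs => by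
    have hlip := (lipschitzWith_negPart (α := ℝ)).dist_le_mul (f s) (f' s)
    simp only [Real.dist_eq, NNReal.coe_one, one_mul] at hlip
    linarith [le_abs_self ((f s)⁻ - (f' s)⁻), negPart_le_regulator hf' hs, h s hs]

lemma abs_skorokhodMap_sub_le (ht : 0 ≤ t) (hf : ContinuousOn f (Icc 0 t))
    (hf' : ContinuousOn f' (Icc 0 t)) (h : ∀ s ∈ Icc 0 t, |f s - f' s| ≤ ε) :
    |skorokhodMap f t - skorokhodMap f' t| ≤ 2 * ε := by
  have h₁ := regulator_le_add ht hf' h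
  have h₂ := regulator_le_add ht hf fun s hs => abs_sub_comm (f s) (f' s) ▸ h s hs
  have h₃ := abs_le.1 (h t ⟨ht, le_rfl⟩)
  rw [skorokhodMap, skorokhodMap, abs_le]; constructor <;> linarith

/-- Rescaling `[0, t]` to `[0, 1]` exhibits the regulator as a supremum over a fixed compact set
of a jointly continuous function. -/
lemma continuousOn_regulator (hf : ContinuousOn f (Ici 0)) :
    ContinuousOn (regulator f) (Ici 0) := by
  set f₀ : ℝ → ℝ := fun s => f (max s 0)
  have hf₀ : Continuous f₀ :=
    hf.comp_continuous (continuous_id.max continuous_const) fun s => le_max_right s 0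
  have hsup : Continuous fun t => sSup ((fun s => (f₀ (t * s))⁻) '' Icc 0 1) :=
    isCompact_Icc.continuous_sSup (by fun_prop)
  refine hsup.continuousOn.congr fun t ht => ?_
  have himage : (t * ·) '' Icc 0 1 = Icc 0 t := by
    simpa using image_mul_left_Icc ht.out zero_le_one
  rw [regulator, ← himage, image_image]
  refine congrArg sSup (image_congr fun s hs => ?_)
  simp only [f₀, Pi.negPart_apply, max_eq_left (mul_nonneg ht.out hs.1)]

lemma continuousOn_skorokhodMap (hf : ContinuousOn f (Ici 0)) :
    ContinuousOn (skorokhodMap f) (Ici 0) :=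
  hf.add (continuousOn_regulator hf)

lemma regulator_eq_of_forall_pos (hf : ContinuousOn f (Ici 0)) (ha : 0 ≤ a) (hab : a ≤ b)
    (hpos : ∀ u ∈ Icc a b, 0 < skorokhodMap f u) : regulator f a = regulator f b := by
  have hb : 0 ≤ b := ha.trans hab
  obtain ⟨s, hs, hmax⟩ := isCompact_Icc.exists_sSup_image_eq (nonempty_Icc.2 hb)
    (continuous_negPart.comp_continuousOn (hf.mono (Icc_subset_Ici_self : Icc 0 b ⊆ Ici 0)))
  change regulator f b = (f s)⁻ at hmax
  refine le_antisymm (monotoneOn_regulator hf ha hb hab) ?_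
  rcases le_or_gt s a with hsa | has
  · exact hmax ▸ negPart_le_regulator (hf.mono Icc_subset_Ici_self) ⟨hs.1, hsa⟩
  · have hreg : regulator f s = (f s)⁻ := le_antisymm
      (hmax ▸ monotoneOn_regulator hf hs.1 hb hs.2)
      (negPart_le_regulator (hf.mono Icc_subset_Ici_self) ⟨hs.1, le_rfl⟩)
    have hfs : 0 ≤ f s := by
      by_contra! hneg
      have := hpos s ⟨has.le, hs.2⟩
      rw [skorokhodMap, hreg, negPart_eq_neg.2 hneg.le] at this
      linarith
    rw [hmax, negPart_eq_zero.2 hfs]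
    exact regulator_nonneg (hf.mono Icc_subset_Ici_self) ha

end Regulator

lemma intervalIntegrable_of_continuousOn_Ici {w : ℝ → ℝ} {t : ℝ} (hw : ContinuousOn w (Ici 0))
    (ht : 0 ≤ t) : IntervalIntegrable w MeasureTheory.volume 0 t :=
  (hw.mono Icc_subset_Ici_self).intervalIntegrable_of_Icc ht

def VolterraLipschitzWith (K : NNReal) (Φ : (ℝ → ℝ) → ℝ → ℝ) : Prop :=
  ∀ u v, ContinuousOn u (Ici 0) → ContinuousOn v (Ici 0) → ∀ t, 0 ≤ t →
    |Φ u t - Φ v t| ≤ K * ∫ s in (0 : ℝ)..t, |u s - v s|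

noncomputable def picardLimit (Φ : (ℝ → ℝ) → ℝ → ℝ) (t : ℝ) : ℝ :=
  ∑' k, (Φ^[k + 1] 0 t - Φ^[k] 0 t)

lemma mul_integral_pow_div_factorial (K C t : ℝ) (k : ℕ) :
    K * ∫ s in (0 : ℝ)..t, C * (K * s) ^ k / k.factorial =
      C * (K * t) ^ (k + 1) / (k + 1).factorial := by
  simp only [mul_pow, mul_div_assoc, integral_const_mul, intervalIntegral.integral_div,
    integral_pow]
  push_cast [Nat.factorial_succ]
  field_simp
  ring

section Volterra

variable {Φ : (ℝ → ℝ) → ℝ → ℝ} {K : NNReal}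

lemma continuousOn_iterate (hΦ : ∀ u, ContinuousOn u (Ici 0) → ContinuousOn (Φ u) (Ici 0))
    (k : ℕ) : ContinuousOn (Φ^[k] 0) (Ici 0) := by
  induction k with
  | zero => exact continuousOn_const
  | succ k ih => rw [Function.iterate_succ_apply']; exact hΦ _ ih

lemma abs_iterate_succ_sub_iterate_le
    (hΦ : ∀ u, ContinuousOn u (Ici 0) → ContinuousOn (Φ u) (Ici 0))
    (hL : VolterraLipschitzWith K Φ) {T C : ℝ} (hC : ∀ t ∈ Icc 0 T, |Φ 0 t| ≤ C)
    (k : ℕ) : ∀ t ∈ Icc 0 T, |Φ^[k + 1] 0 t - Φ^[k] 0 t| ≤ C * (K * t) ^ k / k.factorial := by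
  induction k with
  | zero => simpa using hC
  | succ k ih =>
    intro t ht
    have hd := (continuousOn_iterate hΦ (k + 1)).sub (continuousOn_iterate hΦ k)
    calc |Φ^[k + 2] 0 t - Φ^[k + 1] 0 t|
        = |Φ (Φ^[k + 1] 0) t - Φ (Φ^[k] 0) t| := by
          rw [Function.iterate_succ_apply', Function.iterate_succ_apply' Φ k]
      _ ≤ K * ∫ s in (0 : ℝ)..t, |Φ^[k + 1] 0 s - Φ^[k] 0 s| :=
          hL _ _ (continuousOn_iterate hΦ _) (continuousOn_iterate hΦ _) t ht.1
      _ ≤ K * ∫ s in (0 : ℝ)..t, C * (K * s) ^ k / k.factorial := by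
          gcongr
          refine integral_mono_on ht.1 (intervalIntegrable_of_continuousOn_Ici hd.abs ht.1)
            (Continuous.intervalIntegrable (by fun_prop) _ _)
            fun s hs => ih s ⟨hs.1, hs.2.trans ht.2⟩
      _ = C * (K * t) ^ (k + 1) / (k + 1).factorial := mul_integral_pow_div_factorial K C t k

lemma tendstoUniformlyOn_iterate_picardLimit
    (hΦ : ∀ u, ContinuousOn u (Ici 0) → ContinuousOn (Φ u) (Ici 0))
    (hL : VolterraLipschitzWith K Φ) (T : ℝ) :
    TendstoUniformlyOn (fun k => Φ^[k] 0) (picardLimit Φ) atTop (Icc 0 T) := by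
  obtain ⟨C, hC⟩ := isCompact_Icc.exists_bound_of_continuousOn
    ((hΦ 0 continuousOn_const).mono (Icc_subset_Ici_self : Icc 0 T ⊆ Ici 0))
  have hbound : ∀ k, ∀ t ∈ Icc 0 T,
      ‖Φ^[k + 1] 0 t - Φ^[k] 0 t‖ ≤ C * ((K * T) ^ k / k.factorial) := fun k t ht => by
    have hC₀ : 0 ≤ C := (norm_nonneg _).trans (hC t ht)
    rw [Real.norm_eq_abs, ← mul_div_assoc]
    refine (abs_iterate_succ_sub_iterate_le hΦ hL hC k t ht).trans ?_
    gcongr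
    · exact mul_nonneg K.coe_nonneg ht.1
    · exact ht.2
  refine (tendstoUniformlyOn_tsum_nat ((Real.summable_pow_div_factorial _).mul_left C)
    hbound).congr (Eventually.of_forall fun N t _ => ?_)
  simpa using Finset.sum_range_sub (fun k => Φ^[k] 0 t) N

lemma VolterraLipschitzWith.tendsto_apply (hL : VolterraLipschitzWith K Φ)
    {u : ℕ → ℝ → ℝ} {v : ℝ → ℝ} (hu : ∀ k, ContinuousOn (u k) (Ici 0))
    (hv : ContinuousOn v (Ici 0)) {t : ℝ} (ht : 0 ≤ t)
    (huv : TendstoUniformlyOn u v atTop (Icc 0 t)) :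
    Tendsto (fun k => Φ (u k) t) atTop (𝓝 (Φ v t)) := by
  rw [Metric.tendsto_atTop]
  intro ε hε
  set δ := ε / (K * t + 1)
  obtain ⟨N, hN⟩ := eventually_atTop.1 (Metric.tendstoUniformlyOn_iff.1 huv δ (by positivity))
  refine ⟨N, fun k hk => ?_⟩
  have hint : ∫ s in (0 : ℝ)..t, |u k s - v s| ≤ δ * t := by
    have hclose : ∀ s ∈ Ι 0 t, ‖|u k s - v s|‖ ≤ δ := fun s hs => by
      rw [uIoc_of_le ht] at hs
      simpa [Real.dist_eq, abs_sub_comm] using (hN k hk s (Ioc_subset_Icc_self hs)).le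
    simpa [abs_of_nonneg ht] using
      (Real.le_norm_self _).trans (norm_integral_le_of_norm_le_const hclose)
  calc dist (Φ (u k) t) (Φ v t) ≤ K * ∫ s in (0 : ℝ)..t, |u k s - v s| := hL _ _ (hu k) hv t ht
    _ ≤ K * (δ * t) := by gcongr
    _ < ε := by
      rw [show K * (δ * t) = ε * (K * t / (K * t + 1)) by ring]
      exact mul_lt_of_lt_one_right hε ((div_lt_one (by positivity)).2 (lt_add_one _))

end Volterra

theorem VolterraLipschitzWith.exists_fixedPoint {Φ : (ℝ → ℝ) → ℝ → ℝ} {K : NNReal}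
    (hL : VolterraLipschitzWith K Φ)
    (hΦ : ∀ u, ContinuousOn u (Ici 0) → ContinuousOn (Φ u) (Ici 0)) :
    ∃ z, ContinuousOn z (Ici 0) ∧ ∀ t, 0 ≤ t → Φ z t = z t := by
  have hlim T := tendstoUniformlyOn_iterate_picardLimit hΦ hL T
  have hz : ContinuousOn (picardLimit Φ) (Ici 0) := continuousOn_Ici_of_forall_Icc fun T _ =>
    (hlim T).continuousOn
      (Frequently.of_forall fun k => (continuousOn_iterate hΦ k).mono Icc_subset_Ici_self)
  refine ⟨picardLimit Φ, hz, fun t ht => tendsto_nhds_unique ?_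
    (((hlim t).tendsto_at ⟨ht, le_rfl⟩).comp (tendsto_add_atTop_nat 1))⟩
  simpa only [Function.comp_def, Function.iterate_succ_apply'] using
    hL.tendsto_apply (continuousOn_iterate hΦ) hz ht (hlim t)

noncomputable def freePath (g x z : ℝ → ℝ) (t : ℝ) : ℝ := (∫ s in (0 : ℝ)..t, g (z s)) + x t

section FreePath

variable {g x u v : ℝ → ℝ}

lemma continuousOn_freePath (hg : Continuous g) (hx : ContinuousOn x (Ici 0))
    (hu : ContinuousOn u (Ici 0)) : ContinuousOn (freePath g x u) (Ici 0) := by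
  refine ContinuousOn.add (continuousOn_Ici_of_forall_Icc fun b hb => ?_) hx
  simpa only [uIcc_of_le hb, Function.comp_def] using continuousOn_primitive_interval'
    (intervalIntegrable_of_continuousOn_Ici (hg.comp_continuousOn hu) hb) left_mem_uIcc

lemma abs_freePath_sub_le {L : NNReal} (hg : LipschitzWith L g) (hu : ContinuousOn u (Ici 0))
    (hv : ContinuousOn v (Ici 0)) {s t : ℝ} (hs : s ∈ Icc 0 t) :
    |freePath g x u s - freePath g x v s| ≤ L * ∫ r in (0 : ℝ)..t, |u r - v r| := by
  have hint {w : ℝ → ℝ} (hw : ContinuousOn w (Ici 0)) {b : ℝ} (hb : 0 ≤ b) :=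
    intervalIntegrable_of_continuousOn_Ici hw hb
  have hgu : ContinuousOn (fun r => g (u r)) (Ici 0) := hg.continuous.comp_continuousOn hu
  have hgv : ContinuousOn (fun r => g (v r)) (Ici 0) := hg.continuous.comp_continuousOn hv
  calc |freePath g x u s - freePath g x v s|
      = |∫ r in (0 : ℝ)..s, (g (u r) - g (v r))| := by
        rw [integral_sub (hint hgu hs.1) (hint hgv hs.1), freePath, freePath,
          add_sub_add_right_eq_sub]
    _ ≤ ∫ r in (0 : ℝ)..s, |g (u r) - g (v r)| := abs_integral_le_integral_abs hs.1
    _ ≤ ∫ r in (0 : ℝ)..s, L * |u r - v r| :=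
        integral_mono_on hs.1 (hint (hgu.sub hgv).abs hs.1)
          (hint (continuousOn_const.mul (hu.sub hv).abs) hs.1)
          fun r _ => by simpa [Real.dist_eq] using hg.dist_le_mul (u r) (v r)
    _ ≤ ∫ r in (0 : ℝ)..t, L * |u r - v r| :=
        integral_mono_interval le_rfl hs.1 hs.2 (Eventually.of_forall fun r => by positivity)
          (hint (continuousOn_const.mul (hu.sub hv).abs) (hs.1.trans hs.2))
    _ = L * ∫ r in (0 : ℝ)..t, |u r - v r| := integral_const_mul _ _

lemma volterraLipschitzWith_skorokhodMap_freePath {L : NNReal} (hg : LipschitzWith L g)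
    (hx : ContinuousOn x (Ici 0)) :
    VolterraLipschitzWith (2 * L) fun z => skorokhodMap (freePath g x z) := by
  intro u v hu hv t ht
  have hF {w : ℝ → ℝ} (hw : ContinuousOn w (Ici 0)) :=
    (continuousOn_freePath hg.continuous hx hw).mono (Icc_subset_Ici_self : Icc 0 t ⊆ Ici 0)
  calc |skorokhodMap (freePath g x u) t - skorokhodMap (freePath g x v) t|
      ≤ 2 * (L * ∫ r in (0 : ℝ)..t, |u r - v r|) :=
        abs_skorokhodMap_sub_le ht (hF hu) (hF hv) fun s hs => abs_freePath_sub_le hg hu hv hs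
    _ = _ := by push_cast; ring

end FreePath

end Skorokhod

open Skorokhod

/-- Existence for the one-dimensional Skorokhod reflection problem with Lipschitz
state-dependent drift `g`. -/
theorem stmt13 (g : ℝ → ℝ) (hg : ∃ L : NNReal, LipschitzWith L g)
    (x : ℝ → ℝ) (hx : ContinuousOn x (Set.Ici 0)) (hx0 : 0 ≤ x 0) :
    ∃ y z : ℝ → ℝ, IsSkorokhodSolution g x y z := by
  obtain ⟨L, hgL⟩ := hg
  have hfree {u : ℝ → ℝ} (hu : ContinuousOn u (Ici 0)) :=
    continuousOn_freePath hgL.continuous hx hu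
  obtain ⟨z, hz, hfix⟩ := (volterraLipschitzWith_skorokhodMap_freePath hgL hx).exists_fixedPoint
    fun u hu => continuousOn_skorokhodMap (hfree hu)
  refine ⟨regulator (freePath g x z), z, continuousOn_regulator (hfree hz), hz,
    fun t ht => (hfix t ht).symm, fun t ht => ?_, ?_, monotoneOn_regulator (hfree hz),
    fun a b ha hab hpos => ?_⟩
  · exact hfix t ht ▸ skorokhodMap_nonneg ((hfree hz).mono Icc_subset_Ici_self) ht
  · exact regulator_zero (by simpa [freePath] using hx0)
  · exact regulator_eq_of_forall_pos (hfree hz) ha hab fun u hu =>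
      hfix u (ha.trans hu.1) ▸ hpos u hu
end

section
/- Let θ : ℝ → ℝ be continuous and bounded, let σ > 0, m > 0, m_e > 0, and let α, β, γ ∈ ℝ. For each v ∈ ℝ and W > 0 define G_{v,W} : [0,∞) → ℝ by G_{v,W}(w) = α·w + β·v + γ for w ≥ W, and on [0,W] as the unique continuously differentiable solution of (σ²/2)·G'(w) = v − min_{k ∈ [0, w/m_e]} ( w/m + k·(1 − m_e/m) − θ(k)·G(w) ) with terminal value G(W) = α·W + β·v + γ. Then for every w ≥ 0, the map (v, W) ↦ G_{v,W}(w) is jointly continuous on ℝ × (0,∞). -/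
/-!
The Hamiltonian `x ↦ min_k (w/m + k(1 - m_e/m) - θ(k) x)` is a minimum of affine functions
whose slopes are bounded by `C = sup |θ|`, hence `C`-Lipschitz. Grönwall's inequality, run
backwards from the terminal point, then bounds every solution `G_{v,W}` uniformly for `(v, W)`
near `(v₀, W₀)`, and so also its derivative. On `[min W W₀, ∞)` both `G_{v,W}` and `G_{v₀,W₀}`
are within `O(|W - W₀|)` of their affine continuations, and below `min W W₀` Grönwall again
propagates this discrepancy together with the `O(|v - v₀|)` change of the vector field. This
gives a local Lipschitz estimate in `(v, W)`.
-/

open Set Real Filter Topology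

theorem continuousWithinAt_of_locally_lipschitzOn {X Y : Type*} [PseudoMetricSpace X]
    [PseudoMetricSpace Y] {f : X → Y} {s : Set X} {x : X} {r : ℝ} (hr : 0 < r) (K : ℝ)
    (h : ∀ y ∈ s, dist y x < r → dist (f y) (f x) ≤ K * dist y x) :
    ContinuousWithinAt f s x := by
  refine tendsto_iff_dist_tendsto_zero.2 (squeeze_zero' (Eventually.of_forall fun _ => dist_nonneg)
    (mem_of_superset (inter_mem_nhdsWithin s (Metric.ball_mem_nhds x hr))
      fun y hy => h y hy.1 hy.2) ?_)
  exact (Continuous.tendsto' (by fun_prop) x 0 (by simp)).mono_left nhdsWithin_le_nhds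

theorem abs_csInf_image_sub_le {ι : Type*} {S : Set ι} {f g : ι → ℝ} {ε : ℝ} (hS : S.Nonempty)
    (hf : BddBelow (f '' S)) (hg : BddBelow (g '' S)) (hfg : ∀ k ∈ S, |f k - g k| ≤ ε) :
    |sInf (f '' S) - sInf (g '' S)| ≤ ε := by
  have key : ∀ {f g : ι → ℝ}, BddBelow (f '' S) → (∀ k ∈ S, f k ≤ g k + ε) →
      sInf (f '' S) - ε ≤ sInf (g '' S) := fun hf hfg =>
    le_csInf (hS.image _) (forall_mem_image.2 fun k hk => by
      linarith [csInf_le hf (mem_image_of_mem _ hk), hfg k hk])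
  rw [abs_sub_le_iff]
  constructor
  · linarith [key (g := g) hf fun k hk => by linarith [(abs_le.1 (hfg k hk)).2]]
  · linarith [key (g := f) hg fun k hk => by linarith [(abs_le.1 (hfg k hk)).1]]

theorem abs_sub_le_gronwallBound_of_hasDerivWithinAt_backward {f g f' g' : ℝ → ℝ}
    {a b δ K ε : ℝ} (hf : ∀ t ∈ Icc a b, HasDerivWithinAt f (f' t) (Icc a b) t)
    (hg : ∀ t ∈ Icc a b, HasDerivWithinAt g (g' t) (Icc a b) t) (hb : |f b - g b| ≤ δ)
    (bound : ∀ t ∈ Icc a b, |f' t - g' t| ≤ K * |f t - g t| + ε) :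
    ∀ t ∈ Icc a b, |f t - g t| ≤ gronwallBound δ K ε (b - t) := by
  set r : ℝ → ℝ := fun s => a + b - s
  have hr : MapsTo r (Icc a b) (Icc a b) := fun s hs => by
    simp only [r, mem_Icc] at hs ⊢
    constructor <;> linarith [hs.1, hs.2]
  have hφ : ∀ s ∈ Icc a b, HasDerivWithinAt (fun s => f (r s) - g (r s))
      (-(f' (r s) - g' (r s))) (Icc a b) s := by
    intro s hs
    have hr' : HasDerivWithinAt r (-1) (Icc a b) s := by
      simpa using ((hasDerivAt_id s).const_sub (a + b)).hasDerivWithinAt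
    exact (((hf _ (hr hs)).comp s hr' hr).fun_sub ((hg _ (hr hs)).comp s hr' hr)).congr_deriv
      (by ring)
  intro t ht
  have key := norm_le_gronwallBound_of_norm_deriv_right_le
    (fun s hs => (hφ s hs).continuousWithinAt)
    (fun s hs => (hφ s (Ico_subset_Icc_self hs)).mono_of_mem_nhdsWithin (Icc_mem_nhdsGE_of_mem hs))
    (by simpa [r] using hb)
    (fun s hs => by simpa [abs_sub_comm] using bound (r s) (hr (Ico_subset_Icc_self hs)))
    (r t) (hr ht)
  convert key using 2
  · simp [r]
  · simp only [r]; ring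

theorem gronwallBound_le_mul_exp {δ K ε x R : ℝ} (hδ : 0 ≤ δ) (hK : 0 ≤ K) (hε : 0 ≤ ε)
    (hxR : x ≤ R) : gronwallBound δ K ε x ≤ (δ + ε * R) * exp (K * R) := by
  refine (gronwallBound_mono hδ hε hK hxR).trans ?_
  rcases hK.eq_or_lt with rfl | hK
  · simp [gronwallBound_K0]
  rw [gronwallBound_of_K_ne_0 hK.ne']
  -- `1 - e^{-y} ≤ y`, multiplied by `e^y`
  have hexp : exp (K * R) - 1 ≤ K * R * exp (K * R) := by
    have h₁ : exp (-(K * R)) * exp (K * R) = 1 := by rw [← exp_add]; simp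
    nlinarith [add_one_le_exp (-(K * R)), exp_pos (K * R)]
  have : ε / K * (exp (K * R) - 1) ≤ ε * R * exp (K * R) := by
    rw [div_mul_eq_mul_div, div_le_iff₀ hK]
    nlinarith
  nlinarith

noncomputable def hjbHamiltonian (θ : ℝ → ℝ) (m me t x : ℝ) : ℝ :=
  sInf ((fun k => t / m + k * (1 - me / m) - θ k * x) '' Icc 0 (t / me))

section hjbHamiltonian

variable {θ : ℝ → ℝ} {C m me t : ℝ}

theorem div_add_mul_one_sub_div_nonneg (hm : 0 < m) (hme : 0 < me) {k : ℝ}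
    (hk : k ∈ Icc 0 (t / me)) : 0 ≤ t / m + k * (1 - me / m) := by
  have hkt : k * me ≤ t := (le_div_iff₀ hme).1 hk.2
  have : t / m + k * (1 - me / m) = (t - k * me) / m + k := by field_simp; ring
  rw [this]
  exact add_nonneg (div_nonneg (by linarith) hm.le) hk.1

theorem bddBelow_hjbHamiltonian_image (hC : ∀ k, |θ k| ≤ C) (hm : 0 < m) (hme : 0 < me)
    (x : ℝ) : BddBelow ((fun k => t / m + k * (1 - me / m) - θ k * x) '' Icc 0 (t / me)) := by
  refine ⟨-(C * |x|), forall_mem_image.2 fun k hk => ?_⟩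
  have hθx : θ k * x ≤ C * |x| := (le_abs_self _).trans
    (by rw [abs_mul]; exact mul_le_mul_of_nonneg_right (hC k) (abs_nonneg x))
  linarith [div_add_mul_one_sub_div_nonneg hm hme hk]

theorem abs_hjbHamiltonian_sub_le (hC : ∀ k, |θ k| ≤ C) (hm : 0 < m) (hme : 0 < me)
    (ht : 0 ≤ t) (x y : ℝ) :
    |hjbHamiltonian θ m me t x - hjbHamiltonian θ m me t y| ≤ C * |x - y| := by
  refine abs_csInf_image_sub_le ⟨0, left_mem_Icc.2 (div_nonneg ht hme.le)⟩
    (bddBelow_hjbHamiltonian_image hC hm hme x) (bddBelow_hjbHamiltonian_image hC hm hme y)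
    fun k _ => ?_
  rw [show t / m + k * (1 - me / m) - θ k * x - (t / m + k * (1 - me / m) - θ k * y) =
    θ k * (y - x) by ring, abs_mul, abs_sub_comm]
  exact mul_le_mul_of_nonneg_right (hC k) (abs_nonneg _)

theorem abs_hjbHamiltonian_zero_le (hm : 0 < m) (hme : 0 < me) (ht : 0 ≤ t) :
    |hjbHamiltonian θ m me t 0| ≤ t / m := by
  have hnonneg : ∀ y ∈ (fun k => t / m + k * (1 - me / m)) '' Icc 0 (t / me), 0 ≤ y :=
    forall_mem_image.2 fun k hk => div_add_mul_one_sub_div_nonneg hm hme hk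
  have h0 : (0 : ℝ) ∈ Icc 0 (t / me) := left_mem_Icc.2 (div_nonneg ht hme.le)
  simp only [hjbHamiltonian, mul_zero, sub_zero]
  rw [abs_le]
  constructor
  · linarith [le_csInf (Nonempty.image _ ⟨0, h0⟩) hnonneg, div_nonneg ht hm.le]
  · simpa using csInf_le ⟨0, hnonneg⟩ (mem_image_of_mem _ h0)

end hjbHamiltonian

structure IsHJBSolution_s15 (H : ℝ → ℝ → ℝ) (κ α β γ v W : ℝ) (g : ℝ → ℝ) : Prop where
  eq_affine : ∀ w, W ≤ w → g w = α * w + β * v + γ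
  hasDerivWithinAt : ∀ w ∈ Icc 0 W, HasDerivWithinAt g ((v - H w (g w)) / κ) (Icc 0 W) w

theorem abs_sub_affine_le_of_hasDerivWithinAt {g g' : ℝ → ℝ} {W T K a c w : ℝ}
    (hg : ∀ t ∈ Icc 0 W, HasDerivWithinAt g (g' t) (Icc 0 W) t) (hK : ∀ t ∈ Icc 0 W, |g' t| ≤ K)
    (haff : ∀ w, W ≤ w → g w = a * w + c) (hT : 0 ≤ T) (hTW : T ≤ W) (hw : T ≤ w) :
    |g w - (a * w + c)| ≤ (K + |a|) * (W - T) := by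
  have hK0 : 0 ≤ K := (abs_nonneg _).trans (hK T ⟨hT, hTW⟩)
  rcases le_total W w with hWw | hwW
  · rw [haff w hWw, sub_self, abs_zero]
    exact mul_nonneg (by positivity) (by linarith)
  have hd : ∀ t ∈ Icc 0 W,
      HasDerivWithinAt (fun t => g t - (a * t + c)) (g' t - a) (Icc 0 W) t := fun t ht => by
    simpa using (hg t ht).fun_sub (((hasDerivAt_id t).const_mul a).add_const c).hasDerivWithinAt
  have hbound : ∀ t ∈ Icc 0 W, ‖g' t - a‖ ≤ K + |a| := fun t ht =>
    (abs_sub _ _).trans (by linarith [hK t ht])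
  have := Convex.norm_image_sub_le_of_norm_hasDerivWithin_le hd hbound (convex_Icc 0 W)
    ⟨hT.trans hw, hwW⟩ (right_mem_Icc.2 (hT.trans hTW))
  rw [haff W le_rfl, sub_self, zero_sub, norm_neg, Real.norm_eq_abs, Real.norm_eq_abs,
    abs_of_nonneg (sub_nonneg.2 hwW)] at this
  exact this.trans (by gcongr)

section HJBSolution

variable {H : ℝ → ℝ → ℝ} {κ C A R α β γ : ℝ}

theorem abs_sub_div_le_of_lipschitz (hκ : 0 < κ) (hH : ∀ t, 0 ≤ t → ∀ x y, |H t x - H t y| ≤ C * |x - y|)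
    (hA : ∀ t ∈ Icc 0 R, |H t 0| ≤ A) {t : ℝ} (ht : t ∈ Icc 0 R) (v x : ℝ) :
    |(v - H t x) / κ| ≤ (|v| + A + C * |x|) / κ := by
  rw [abs_div, abs_of_pos hκ]
  gcongr
  have hHx : |H t x - H t 0| ≤ C * |x| := by simpa using hH t ht.1 x 0
  linarith [abs_sub v (H t x), abs_sub_abs_le_abs_sub (H t x) (H t 0), hA t ht]

namespace IsHJBSolution_s15

variable {V v W : ℝ} {g : ℝ → ℝ}

theorem abs_le_mul_exp (hg : IsHJBSolution_s15 H κ α β γ v W g) (hκ : 0 < κ) (hC : 0 ≤ C)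
    (hH : ∀ t, 0 ≤ t → ∀ x y, |H t x - H t y| ≤ C * |x - y|) (hA : ∀ t ∈ Icc 0 R, |H t 0| ≤ A)
    (hv : |v| ≤ V) (hWR : W ≤ R) :
    ∀ t ∈ Icc 0 W, |g t| ≤ (|α| * R + |β| * V + |γ| + (V + A) / κ * R) * exp (C / κ * R) := by
  intro t ht
  have hW : 0 ≤ W := ht.1.trans ht.2
  have hgW : |g W - 0| ≤ |α| * R + |β| * V + |γ| := by
    rw [sub_zero, hg.eq_affine W le_rfl]
    refine (abs_add_three _ _ _).trans ?_
    rw [abs_mul, abs_mul, abs_of_nonneg hW]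
    gcongr
  have hsub : Icc t W ⊆ Icc 0 W := Icc_subset_Icc_left ht.1
  have hbound : ∀ s ∈ Icc t W,
      |(v - H s (g s)) / κ - 0| ≤ C / κ * |g s - 0| + (V + A) / κ := fun s hs => by
    rw [sub_zero, sub_zero]
    refine (abs_sub_div_le_of_lipschitz hκ hH hA ⟨(hsub hs).1, hs.2.trans hWR⟩ v (g s)).trans ?_
    have : (|v| + A + C * |g s|) / κ ≤ (V + A + C * |g s|) / κ := by gcongr
    linarith [show (V + A + C * |g s|) / κ = C / κ * |g s| + (V + A) / κ by ring]
  have hA0 : 0 ≤ A := (abs_nonneg _).trans (hA t ⟨ht.1, ht.2.trans hWR⟩)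
  have hR : 0 ≤ R := hW.trans hWR
  have hV : 0 ≤ V := (abs_nonneg v).trans hv
  have := abs_sub_le_gronwallBound_of_hasDerivWithinAt_backward (g := fun _ => 0)
    (fun s hs => (hg.hasDerivWithinAt s (hsub hs)).mono hsub)
    (fun s _ => hasDerivWithinAt_const _ _ _) hgW hbound t (left_mem_Icc.2 ht.2)
  rw [sub_zero] at this
  exact this.trans (gronwallBound_le_mul_exp (by positivity) (by positivity)
    (by positivity) (by linarith [ht.1]))

theorem abs_sub_le_gronwallBound {v₁ v₂ W₁ W₂ T : ℝ} {g₁ g₂ : ℝ → ℝ}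
    (h₁ : IsHJBSolution_s15 H κ α β γ v₁ W₁ g₁) (h₂ : IsHJBSolution_s15 H κ α β γ v₂ W₂ g₂)
    (hκ : 0 < κ) (hH : ∀ t, 0 ≤ t → ∀ x y, |H t x - H t y| ≤ C * |x - y|)
    (hT₁ : T ≤ W₁) (hT₂ : T ≤ W₂) :
    ∀ w ∈ Icc 0 T,
      |g₁ w - g₂ w| ≤ gronwallBound |g₁ T - g₂ T| (C / κ) (|v₁ - v₂| / κ) (T - w) := by
  have hs₁ : Icc 0 T ⊆ Icc 0 W₁ := Icc_subset_Icc_right hT₁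
  have hs₂ : Icc 0 T ⊆ Icc 0 W₂ := Icc_subset_Icc_right hT₂
  refine abs_sub_le_gronwallBound_of_hasDerivWithinAt_backward
    (fun t ht => (h₁.hasDerivWithinAt t (hs₁ ht)).mono hs₁)
    (fun t ht => (h₂.hasDerivWithinAt t (hs₂ ht)).mono hs₂) le_rfl fun t ht => ?_
  have hHt := hH t ht.1 (g₁ t) (g₂ t)
  calc |(v₁ - H t (g₁ t)) / κ - (v₂ - H t (g₂ t)) / κ|
      = |(v₁ - v₂) - (H t (g₁ t) - H t (g₂ t))| / κ := by
        rw [← sub_div, abs_div, abs_of_pos hκ]; ring_nf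
    _ ≤ (|v₁ - v₂| + C * |g₁ t - g₂ t|) / κ := by
        gcongr; exact (abs_sub _ _).trans (by linarith)
    _ = C / κ * |g₁ t - g₂ t| + |v₁ - v₂| / κ := by ring

theorem abs_sub_le_of_min_le {v₁ v₂ W₁ W₂ K w : ℝ} {g₁ g₂ : ℝ → ℝ}
    (h₁ : IsHJBSolution_s15 H κ α β γ v₁ W₁ g₁) (h₂ : IsHJBSolution_s15 H κ α β γ v₂ W₂ g₂)
    (hK₁ : ∀ t ∈ Icc 0 W₁, |(v₁ - H t (g₁ t)) / κ| ≤ K)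
    (hK₂ : ∀ t ∈ Icc 0 W₂, |(v₂ - H t (g₂ t)) / κ| ≤ K) (hW₁ : 0 ≤ W₁) (hW₂ : 0 ≤ W₂)
    (hw : min W₁ W₂ ≤ w) : |g₁ w - g₂ w| ≤ 2 * (K + |α|) * |W₁ - W₂| + |β| * |v₁ - v₂| := by
  have hT : 0 ≤ min W₁ W₂ := le_min hW₁ hW₂
  have e₁ := abs_sub_affine_le_of_hasDerivWithinAt h₁.hasDerivWithinAt hK₁
    (fun w hw => (h₁.eq_affine w hw).trans (add_assoc _ _ _)) hT (min_le_left _ _) hw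
  have e₂ := abs_sub_affine_le_of_hasDerivWithinAt h₂.hasDerivWithinAt hK₂
    (fun w hw => (h₂.eq_affine w hw).trans (add_assoc _ _ _)) hT (min_le_right _ _) hw
  have hT₁ : W₁ - min W₁ W₂ ≤ |W₁ - W₂| := by
    rw [abs_sub_comm, ← max_sub_min_eq_abs]; linarith [le_max_left W₁ W₂]
  have hT₂ : W₂ - min W₁ W₂ ≤ |W₁ - W₂| := by
    rw [abs_sub_comm, ← max_sub_min_eq_abs]; linarith [le_max_right W₁ W₂]
  have e₃ := abs_add_three (g₁ w - (α * w + (β * v₁ + γ))) (α * w + (β * v₂ + γ) - g₂ w)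
    (β * (v₁ - v₂))
  rw [show g₁ w - (α * w + (β * v₁ + γ)) + (α * w + (β * v₂ + γ) - g₂ w) + β * (v₁ - v₂) =
    g₁ w - g₂ w by ring, abs_sub_comm (α * w + _), abs_mul] at e₃
  have hKα : 0 ≤ K + |α| := add_nonneg ((abs_nonneg _).trans (hK₁ 0 ⟨le_rfl, hW₁⟩)) (abs_nonneg _)
  nlinarith [mul_le_mul_of_nonneg_left hT₁ hKα, mul_le_mul_of_nonneg_left hT₂ hKα]

end IsHJBSolution_s15

theorem exists_abs_deriv_le_of_isHJBSolution (hκ : 0 < κ) (hC : 0 ≤ C)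
    (hH : ∀ t, 0 ≤ t → ∀ x y, |H t x - H t y| ≤ C * |x - y|) (hA : ∀ t ∈ Icc 0 R, |H t 0| ≤ A)
    (V : ℝ) : ∃ K, ∀ v W g, IsHJBSolution_s15 H κ α β γ v W g → |v| ≤ V → W ≤ R →
      ∀ t ∈ Icc 0 W, |(v - H t (g t)) / κ| ≤ K := by
  refine ⟨(V + A + C * ((|α| * R + |β| * V + |γ| + (V + A) / κ * R) * exp (C / κ * R))) / κ,
    fun v W g hg hv hWR t ht => ?_⟩
  have htR : t ∈ Icc 0 R := ⟨ht.1, ht.2.trans hWR⟩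
  refine (abs_sub_div_le_of_lipschitz hκ hH hA htR v (g t)).trans ?_
  gcongr
  exact hg.abs_le_mul_exp hκ hC hH hA hv hWR t ht

theorem exists_abs_sub_le_of_isHJBSolution (hκ : 0 < κ) (hC : 0 ≤ C)
    (hH : ∀ t, 0 ≤ t → ∀ x y, |H t x - H t y| ≤ C * |x - y|) (hA : ∀ t ∈ Icc 0 R, |H t 0| ≤ A)
    (V : ℝ) : ∃ B, ∀ v₁ W₁ g₁ v₂ W₂ g₂, IsHJBSolution_s15 H κ α β γ v₁ W₁ g₁ →
      IsHJBSolution_s15 H κ α β γ v₂ W₂ g₂ → |v₁| ≤ V → |v₂| ≤ V → 0 ≤ W₁ → 0 ≤ W₂ →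
      W₁ ≤ R → W₂ ≤ R → ∀ w, 0 ≤ w → |g₁ w - g₂ w| ≤ B * dist (v₁, W₁) (v₂, W₂) := by
  obtain ⟨K, hK⟩ := exists_abs_deriv_le_of_isHJBSolution (α := α) (β := β) (γ := γ) hκ hC hH hA V
  set c := 2 * (K + |α|) + |β| + R / κ
  refine ⟨2 * c * exp (C / κ * R), ?_⟩
  intro v₁ W₁ g₁ v₂ W₂ g₂ h₁ h₂ hv₁ hv₂ hW₁ hW₂ hW₁R hW₂R w hw
  have hK₁ := hK v₁ W₁ g₁ h₁ hv₁ hW₁R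
  have tail := fun (w : ℝ) (hw : min W₁ W₂ ≤ w) =>
    h₁.abs_sub_le_of_min_le h₂ hK₁ (hK v₂ W₂ g₂ h₂ hv₂ hW₂R) hW₁ hW₂ hw
  set δ := 2 * (K + |α|) * |W₁ - W₂| + |β| * |v₁ - v₂|
  have hK0 : 0 ≤ K := (abs_nonneg _).trans (hK₁ 0 ⟨le_rfl, hW₁⟩)
  have hR : 0 ≤ R := hW₁.trans hW₁R
  have bound : |g₁ w - g₂ w| ≤ (δ + |v₁ - v₂| / κ * R) * exp (C / κ * R) := by
    rcases le_total (min W₁ W₂) w with hTw | hwT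
    · calc |g₁ w - g₂ w| ≤ δ + |v₁ - v₂| / κ * R := by
            linarith [tail w hTw, show 0 ≤ |v₁ - v₂| / κ * R by positivity]
        _ ≤ (δ + |v₁ - v₂| / κ * R) * exp (C / κ * R) :=
            le_mul_of_one_le_right (by positivity) (one_le_exp (by positivity))
    · calc |g₁ w - g₂ w|
          ≤ gronwallBound |g₁ (min W₁ W₂) - g₂ (min W₁ W₂)| (C / κ) (|v₁ - v₂| / κ)
              (min W₁ W₂ - w) :=
            h₁.abs_sub_le_gronwallBound h₂ hκ hH (min_le_left _ _) (min_le_right _ _) w ⟨hw, hwT⟩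
        _ ≤ (|g₁ (min W₁ W₂) - g₂ (min W₁ W₂)| + |v₁ - v₂| / κ * R) * exp (C / κ * R) :=
            gronwallBound_le_mul_exp (abs_nonneg _) (by positivity) (by positivity)
              (by linarith [min_le_left W₁ W₂])
        _ ≤ (δ + |v₁ - v₂| / κ * R) * exp (C / κ * R) := by gcongr; exact tail _ le_rfl
  have hdist : |v₁ - v₂| + |W₁ - W₂| ≤ 2 * dist (v₁, W₁) (v₂, W₂) := by
    rw [Prod.dist_eq, Real.dist_eq, Real.dist_eq]
    linarith [le_max_left |v₁ - v₂| |W₁ - W₂|, le_max_right |v₁ - v₂| |W₁ - W₂|]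
  have hlin : δ + |v₁ - v₂| / κ * R ≤ c * (|v₁ - v₂| + |W₁ - W₂|) := by
    have : |v₁ - v₂| / κ * R = R / κ * |v₁ - v₂| := by ring
    nlinarith [mul_nonneg (by positivity : (0:ℝ) ≤ 2 * (K + |α|)) (abs_nonneg (v₁ - v₂)),
      mul_nonneg (abs_nonneg β) (abs_nonneg (W₁ - W₂)),
      mul_nonneg (by positivity : 0 ≤ R / κ) (abs_nonneg (W₁ - W₂))]
  calc |g₁ w - g₂ w| ≤ (δ + |v₁ - v₂| / κ * R) * exp (C / κ * R) := bound
    _ ≤ c * (2 * dist (v₁, W₁) (v₂, W₂)) * exp (C / κ * R) := by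
        gcongr
        exact hlin.trans (by gcongr)
    _ = 2 * c * exp (C / κ * R) * dist (v₁, W₁) (v₂, W₂) := by ring

end HJBSolution

theorem stmt15_general (θ : ℝ → ℝ) (hθb : ∃ C, ∀ k, |θ k| ≤ C)
    (σ m me α β γ : ℝ) (hσ : 0 < σ) (hm : 0 < m) (hme : 0 < me)
    (G : ℝ → ℝ → ℝ → ℝ)
    (haff : ∀ v W, 0 < W → ∀ w, W ≤ w → G v W w = α * w + β * v + γ)
    (hode : ∀ v W, 0 < W → ∀ w ∈ Set.Icc 0 W,
      HasDerivWithinAt (G v W)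
        ((v - sInf ((fun k => w / m + k * (1 - me / m) - θ k * G v W w) ''
            Set.Icc 0 (w / me))) / (σ ^ 2 / 2))
        (Set.Icc 0 W) w) :
    ∀ w, 0 ≤ w →
      ContinuousOn (fun p : ℝ × ℝ => G p.1 p.2 w) (Set.univ ×ˢ Set.Ioi 0) := by
  obtain ⟨C, hC⟩ := hθb
  have hκ : 0 < σ ^ 2 / 2 := by positivity
  have hsol : ∀ v W, 0 < W →
      IsHJBSolution_s15 (hjbHamiltonian θ m me) (σ ^ 2 / 2) α β γ v W (G v W) :=
    fun v W hW => ⟨haff v W hW, hode v W hW⟩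
  rintro w hw ⟨v₀, W₀⟩ ⟨-, hW₀ : 0 < W₀⟩
  have hA : ∀ t ∈ Icc 0 (W₀ + 1), |hjbHamiltonian θ m me t 0| ≤ (W₀ + 1) / m := fun t ht =>
    (abs_hjbHamiltonian_zero_le hm hme ht.1).trans (div_le_div_of_nonneg_right ht.2 hm.le)
  obtain ⟨B, hB⟩ := exists_abs_sub_le_of_isHJBSolution (α := α) (β := β) (γ := γ) hκ
    ((abs_nonneg _).trans (hC 0)) (fun t ht => abs_hjbHamiltonian_sub_le hC hm hme ht) hA
    (|v₀| + 1)
  refine continuousWithinAt_of_locally_lipschitzOn one_pos B ?_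
  rintro ⟨v, W⟩ ⟨-, hW : 0 < W⟩ hd
  rw [Prod.dist_eq, max_lt_iff, Real.dist_eq, Real.dist_eq] at hd
  show dist (G v W w) (G v₀ W₀ w) ≤ B * dist (v, W) (v₀, W₀)
  rw [Real.dist_eq]
  exact hB v W _ v₀ W₀ _ (hsol v W hW) (hsol v₀ W₀ hW₀)
    (by linarith [abs_sub_abs_le_abs_sub v v₀]) (by linarith) hW.le hW₀.le
    (by linarith [le_abs_self (W - W₀)]) (by linarith) w hw

/-- Joint continuity of the HJB solution in the average-cost guess `v` and the
fluid continuation point `W`: with `G_{v,W}` affine (`α·w + β·v + γ`) beyond `W` and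
solving the HJB ODE on `[0,W]` with the matching terminal value, the map
`(v, W) ↦ G_{v,W}(w)` is jointly continuous for every `w ≥ 0`. -/
theorem stmt15 (θ : ℝ → ℝ) (hθc : Continuous θ) (hθb : ∃ C, ∀ k, |θ k| ≤ C)
    (σ m me α β γ : ℝ) (hσ : 0 < σ) (hm : 0 < m) (hme : 0 < me)
    (G : ℝ → ℝ → ℝ → ℝ)
    (haff : ∀ v W, 0 < W → ∀ w, W ≤ w → G v W w = α * w + β * v + γ)
    (hcont : ∀ v W, 0 < W → ContinuousOn (G v W) (Set.Icc 0 W))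
    (hode : ∀ v W, 0 < W → ∀ w ∈ Set.Icc 0 W,
      HasDerivWithinAt (G v W)
        ((v - sInf ((fun k => w / m + k * (1 - me / m) - θ k * G v W w) ''
            Set.Icc 0 (w / me))) / (σ ^ 2 / 2))
        (Set.Icc 0 W) w) :
    ∀ w, 0 ≤ w →
      ContinuousOn (fun p : ℝ × ℝ => G p.1 p.2 w) (Set.univ ×ˢ Set.Ioi 0) :=
  stmt15_general θ hθb σ m me α β γ hσ hm hme G haff hode
end
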